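/- arXiv:0805.3761 — 5 statements merged into one kernel-verified Lean document; each statement's English description precedes it below -/
import Mathlib

section
/- Any nonconstant meromorphic function on a compact Riemann surface of genus γ ≥ 1 has at least three distinct branch points. -/
/-! Each branching order is at most `d - 1`, so Riemann–Hurwitz gives
`2 (d + γ - 1) ≤ N (d - 1)`. With `N ≤ 2` this would force `γ ≤ 0`. -/

theorem two_mul_degree_add_genus_sub_one_le_card_mul {ι : Type*} [Fintype ι]
    (γ d : ℕ) (ν : ι → ℕ)
    (hRH : 2 * (d : ℤ) = 2 - 2 * (γ : ℤ) + ∑ k, (ν k : ℤ))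
    (hmult : ∀ k, ν k + 1 ≤ d) :
    2 * ((d : ℤ) + γ - 1) ≤ Fintype.card ι * ((d : ℤ) - 1) := by
  have hsum : ∑ k, (ν k : ℤ) ≤ Fintype.card ι • ((d : ℤ) - 1) :=
    Finset.sum_le_card_nsmul _ _ _ fun k _ => by have := hmult k; omega
  rw [nsmul_eq_mul] at hsum
  linarith

theorem three_branch_points_of_genus_ge_one_general
    (γ N d : ℕ) (ν : Fin N → ℕ)
    (hγ : 1 ≤ γ) (hd : 1 ≤ d)
    (hRH : 2 * (d : ℤ) = 2 - 2 * (γ : ℤ) + ∑ k, (ν k : ℤ))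
    (hmult : ∀ k, (ν k) + 1 ≤ d) :
    3 ≤ N := by
  by_contra! hN
  have hbound := two_mul_degree_add_genus_sub_one_le_card_mul γ d ν hRH hmult
  rw [Fintype.card_fin] at hbound
  have hN2 : (N : ℤ) * ((d : ℤ) - 1) ≤ 2 * ((d : ℤ) - 1) :=
    mul_le_mul_of_nonneg_right (by omega) (by omega)
  omega

/-- Any nonconstant meromorphic function on a compact Riemann surface of genus
`γ ≥ 1` has at least three distinct branch points.  Following the argument in the
paper, the statement is expressed through the Riemann–Hurwitz data: `d` is the
degree of the map (nonzero since the map is nonconstant), `ν k` are the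
(positive) branching orders at the `N` branch points, satisfying the
Riemann–Hurwitz relation `2 d = 2 - 2 γ + Σ ν k` and the multiplicity bound
`d ≥ ν k + 1`.  The conclusion is `N ≥ 3`. -/
theorem three_branch_points_of_genus_ge_one
    (γ N d : ℕ) (ν : Fin N → ℕ)
    (hγ : 1 ≤ γ) (hd : 1 ≤ d)
    (hν : ∀ k, 1 ≤ ν k)
    (hRH : 2 * (d : ℤ) = 2 - 2 * (γ : ℤ) + ∑ k, (ν k : ℤ))
    (hmult : ∀ k, (ν k) + 1 ≤ d) :
    3 ≤ N :=
  three_branch_points_of_genus_ge_one_general γ N d ν hγ hd hRH hmult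
end

section
/- Let m₂, m₃, m₄ be positive integers with m₂ ≤ m₄, m₃ ≤ m₄, and m₂ + m₃ ≠ m₄. Define φ(α₂, α₃) = √(m₂² − 8α₂²) + √(m₃² − 8α₃²) + √(m₄² − 8(α₂+α₃)²) on the open region D = {(α₂,α₃) : 0 < α₂ < m₂/√8, 0 < α₃ < m₃/√8, 0 < α₂ + α₃ < m₄/√8}. Then φ(α₂, α₃) > 1 for all (α₂, α₃) ∈ D. -/
/-!
Put `wᵢ = √8 αᵢ`, so that `w₄ = w₂ + w₃`. Each summand satisfies
`√(m² − w²) = √((m − w)(m + w)) ≥ √(m − w)` because `m + w ≥ 1`, and the three numbers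
`aᵢ = mᵢ − wᵢ > 0` satisfy `a₂ + a₃ − a₄ = m₂ + m₃ − m₄`, a nonzero integer. Hence either
`a₄ ≥ 1 + a₂ + a₃ > 1`, or `a₂ + a₃ ≥ 1 + a₄ > 1`, and in both cases
`√a₂ + √a₃ + √a₄ > 1`.
-/

open Real

namespace Real

theorem sqrt_sub_le_sqrt_sq_sub_sq {m w : ℝ} (h : 1 ≤ m + w) : √(m - w) ≤ √(m ^ 2 - w ^ 2) := by
  rcases le_or_gt w m with hwm | hmw
  · exact sqrt_le_sqrt (by nlinarith)
  · rw [sqrt_eq_zero'.mpr (by linarith)]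
    exact sqrt_nonneg _

theorem sqrt_add_le_sqrt_add_sqrt {x y : ℝ} (hx : 0 ≤ x) (hy : 0 ≤ y) : √(x + y) ≤ √x + √y := by
  rw [sqrt_le_left (by positivity), add_sq, sq_sqrt hx, sq_sqrt hy]
  nlinarith [sqrt_nonneg x, sqrt_nonneg y]

theorem one_lt_sqrt_add_sqrt_add_sqrt {a b c : ℝ} (ha : 0 < a) (hb : 0 < b) (hc : 0 < c)
    (h : 1 ≤ |a + b - c|) : 1 < √a + √b + √c := by
  rcases le_abs'.mp h with hneg | hpos
  · have : 1 < √c := by rw [lt_sqrt zero_le_one, one_pow]; linarith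
    linarith [sqrt_nonneg a, sqrt_nonneg b]
  · have : 1 < √(a + b) := by rw [lt_sqrt zero_le_one, one_pow]; linarith
    linarith [sqrt_add_le_sqrt_add_sqrt ha.le hb.le, sqrt_nonneg c]

theorem sqrt_sub_sqrt_eight_mul_le {m α : ℝ} (hm : 1 ≤ m) (hα : 0 ≤ α) :
    √(m - √8 * α) ≤ √(m ^ 2 - 8 * α ^ 2) := by
  rw [show 8 * α ^ 2 = (√8 * α) ^ 2 by rw [mul_pow, sq_sqrt (by norm_num)]]
  exact sqrt_sub_le_sqrt_sq_sub_sq (by nlinarith [sqrt_nonneg 8])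

end Real

theorem sqrt_sum_gt_one_general
    (m₂ m₃ m₄ : ℤ) (hm₂ : 1 ≤ m₂) (hm₃ : 1 ≤ m₃) (hm₄ : 1 ≤ m₄)
    (hne : m₂ + m₃ ≠ m₄)
    (α₂ α₃ : ℝ)
    (h2pos : 0 < α₂) (h2lt : α₂ < (m₂ : ℝ) / Real.sqrt 8)
    (h3pos : 0 < α₃) (h3lt : α₃ < (m₃ : ℝ) / Real.sqrt 8)
    (hslt : α₂ + α₃ < (m₄ : ℝ) / Real.sqrt 8) :
    1 < Real.sqrt ((m₂ : ℝ)^2 - 8 * α₂^2)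
        + Real.sqrt ((m₃ : ℝ)^2 - 8 * α₃^2)
        + Real.sqrt ((m₄ : ℝ)^2 - 8 * (α₂ + α₃)^2) := by
  have h8 : 0 < √8 := by positivity
  rw [lt_div_iff₀' h8] at h2lt h3lt hslt
  have hgap : 1 ≤ |(m₂ - √8 * α₂) + (m₃ - √8 * α₃) - (m₄ - √8 * (α₂ + α₃))| := by
    have : (1 : ℝ) ≤ |((m₂ + m₃ - m₄ : ℤ) : ℝ)| := by
      exact_mod_cast Int.one_le_abs (sub_ne_zero.mpr hne)
    convert this using 2
    push_cast
    ring
  calc 1 < √(m₂ - √8 * α₂) + √(m₃ - √8 * α₃) + √(m₄ - √8 * (α₂ + α₃)) :=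
        one_lt_sqrt_add_sqrt_add_sqrt (by linarith) (by linarith) (by linarith) hgap
    _ ≤ _ := by
      gcongr ?_ + ?_ + ?_
      · exact sqrt_sub_sqrt_eight_mul_le (by exact_mod_cast hm₂) h2pos.le
      · exact sqrt_sub_sqrt_eight_mul_le (by exact_mod_cast hm₃) h3pos.le
      · exact sqrt_sub_sqrt_eight_mul_le (by exact_mod_cast hm₄) (by positivity)

/-- Let `m₂, m₃, m₄` be positive integers with `m₂ ≤ m₄`, `m₃ ≤ m₄`, and
`m₂ + m₃ ≠ m₄`.  Then the function
`φ(α₂, α₃) = √(m₂² − 8α₂²) + √(m₃² − 8α₃²) + √(m₄² − 8(α₂+α₃)²)`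
satisfies `φ > 1` on the open region
`D = {(α₂,α₃) : 0 < α₂ < m₂/√8, 0 < α₃ < m₃/√8, 0 < α₂ + α₃ < m₄/√8}`. -/
theorem sqrt_sum_gt_one
    (m₂ m₃ m₄ : ℤ) (hm₂ : 1 ≤ m₂) (hm₃ : 1 ≤ m₃) (hm₄ : 1 ≤ m₄)
    (h24 : m₂ ≤ m₄) (h34 : m₃ ≤ m₄) (hne : m₂ + m₃ ≠ m₄)
    (α₂ α₃ : ℝ)
    (h2pos : 0 < α₂) (h2lt : α₂ < (m₂ : ℝ) / Real.sqrt 8)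
    (h3pos : 0 < α₃) (h3lt : α₃ < (m₃ : ℝ) / Real.sqrt 8)
    (hspos : 0 < α₂ + α₃) (hslt : α₂ + α₃ < (m₄ : ℝ) / Real.sqrt 8) :
    1 < Real.sqrt ((m₂ : ℝ)^2 - 8 * α₂^2)
        + Real.sqrt ((m₃ : ℝ)^2 - 8 * α₃^2)
        + Real.sqrt ((m₄ : ℝ)^2 - 8 * (α₂ + α₃)^2) :=
  sqrt_sum_gt_one_general m₂ m₃ m₄ hm₂ hm₃ hm₄ hne α₂ α₃ h2pos h2lt h3pos h3lt hslt
end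

section
/- Let μ ∈ ℝ with −1 < μ < 0 and q ∈ ℂ ∖ {0,1}, a, b ∈ ℂ ∖ {0,1,q} with a ≠ b. If (μ+1)(a²+b²) − (μq+1)(a+b) − 2ab + 2q = 0, (μ+1)(a+b)ab − 2(μq+q+2)ab + 2q(a+b) = 0, and μ + 2 − 2/a − 2/b = 0 all hold, then a = b = q = 4/(μ+2), contradicting a ≠ b. Hence the three equations have no solution with a ≠ b. -/
/-!
In terms of `s = a + b` and `p = a * b`, the third equation reads `(μ + 2) p = 2 s`, which lets
us eliminate `p` from the other two: the second becomes `s ((μ + 1) s - μ q - 4) = 0` and the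
first `(μ + 1) s² - (μ q + 5) s + 2 q = 0`. Since `s ≠ 0`, this forces `s = 2 q` and
`(μ + 2) q = 4`, so that the discriminant `(μ + 2)² (s² - 4 p)` of `a` and `b` vanishes,
i.e. `a = b`.
-/

section Field

variable {K : Type*} [Field K] {m q a b : K}

lemma mul_mul_eq_two_mul_add_of_sub_div_sub_div_eq_zero (ha : a ≠ 0) (hb : b ≠ 0)
    (h : m + 2 - 2 / a - 2 / b = 0) : (m + 2) * (a * b) = 2 * (a + b) := by
  field_simp at h
  linear_combination h

lemma add_ne_zero_of_mul_mul_eq_two_mul_add (hm : m + 2 ≠ 0) (ha : a ≠ 0) (hb : b ≠ 0)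
    (h : (m + 2) * (a * b) = 2 * (a + b)) : a + b ≠ 0 := by
  intro hs
  rw [hs, mul_zero] at h
  simp_all

lemma add_eq_two_mul_and_mul_eq_four [NeZero (2 : K)] (hs : a + b ≠ 0)
    (h1 : (m + 1) * (a ^ 2 + b ^ 2) - (m * q + 1) * (a + b) - 2 * a * b + 2 * q = 0)
    (h2 : (m + 1) * (a + b) * (a * b) - 2 * (m * q + q + 2) * (a * b) + 2 * q * (a + b) = 0)
    (h3 : (m + 2) * (a * b) = 2 * (a + b)) :
    a + b = 2 * q ∧ (m + 2) * q = 4 := by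
  have hlin : (m + 1) * (a + b) = m * q + 4 := by
    have hprod : 2 * (a + b) * ((m + 1) * (a + b) - (m * q + 4)) = 0 := by
      linear_combination (m + 2) * h2 - ((m + 1) * (a + b) - 2 * (m * q + q + 2)) * h3
    exact sub_eq_zero.mp ((mul_eq_zero.mp hprod).resolve_left (mul_ne_zero two_ne_zero hs))
  have hquad : (m + 1) * (a + b) ^ 2 - (m * q + 5) * (a + b) + 2 * q = 0 := by
    linear_combination h1 + 2 * h3
  have hsum : a + b = 2 * q := by linear_combination (a + b) * hlin - hquad
  exact ⟨hsum, by linear_combination hlin - (m + 1) * hsum⟩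

theorem eq_of_O0_neg2_neg3_equations [NeZero (2 : K)] (hm : m + 2 ≠ 0)
    (ha : a ≠ 0) (hb : b ≠ 0)
    (h1 : (m + 1) * (a ^ 2 + b ^ 2) - (m * q + 1) * (a + b) - 2 * a * b + 2 * q = 0)
    (h2 : (m + 1) * (a + b) * (a * b) - 2 * (m * q + q + 2) * (a * b) + 2 * q * (a + b) = 0)
    (h3 : m + 2 - 2 / a - 2 / b = 0) : a = b := by
  have hp := mul_mul_eq_two_mul_add_of_sub_div_sub_div_eq_zero ha hb h3
  obtain ⟨hsum, hq⟩ :=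
    add_eq_two_mul_and_mul_eq_four (add_ne_zero_of_mul_mul_eq_two_mul_add hm ha hb hp) h1 h2 hp
  have hdisc : ((m + 2) * (a - b)) ^ 2 = 0 := by
    linear_combination (m + 2) * (a + b) * (2 * hq + (m + 2) * hsum) - 4 * (m + 2) * hp
  simpa [hm, sub_eq_zero] using hdisc

end Field

theorem no_solution_O0_neg2_neg3_general
    (μ : ℝ) (hμ₁ : -1 < μ)
    (q a b : ℂ)
    (ha0 : a ≠ 0)
    (hb0 : b ≠ 0)
    (hab : a ≠ b)
    (h1 : ((μ : ℂ) + 1) * (a ^ 2 + b ^ 2) - ((μ : ℂ) * q + 1) * (a + b)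
        - 2 * a * b + 2 * q = 0)
    (h2 : ((μ : ℂ) + 1) * (a + b) * (a * b) - 2 * ((μ : ℂ) * q + q + 2) * (a * b)
        + 2 * q * (a + b) = 0)
    (h3 : (μ : ℂ) + 2 - 2 / a - 2 / b = 0) :
    False := by
  have hμ : (μ : ℂ) + 2 ≠ 0 := by exact_mod_cast (by linarith : (0 : ℝ) < μ + 2).ne'
  exact hab (eq_of_O0_neg2_neg3_equations hμ ha0 hb0 h1 h2 h3)

/-- Let `μ ∈ (−1, 0)` be real, `q ∈ ℂ ∖ {0,1}`, and `a, b ∈ ℂ ∖ {0,1,q}` with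
`a ≠ b`.  Then the three equations
`(μ+1)(a²+b²) − (μq+1)(a+b) − 2ab + 2q = 0`,
`(μ+1)(a+b)ab − 2(μq+q+2)ab + 2q(a+b) = 0`, and
`μ + 2 − 2/a − 2/b = 0`
cannot hold simultaneously (their only common solution is
`a = b = q = 4/(μ+2)`, contradicting `a ≠ b`). -/
theorem no_solution_O0_neg2_neg3
    (μ : ℝ) (hμ₁ : -1 < μ) (hμ₂ : μ < 0)
    (q a b : ℂ)
    (hq0 : q ≠ 0) (hq1 : q ≠ 1)
    (ha0 : a ≠ 0) (ha1 : a ≠ 1) (haq : a ≠ q)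
    (hb0 : b ≠ 0) (hb1 : b ≠ 1) (hbq : b ≠ q)
    (hab : a ≠ b)
    (h1 : ((μ : ℂ) + 1) * (a ^ 2 + b ^ 2) - ((μ : ℂ) * q + 1) * (a + b)
        - 2 * a * b + 2 * q = 0)
    (h2 : ((μ : ℂ) + 1) * (a + b) * (a * b) - 2 * ((μ : ℂ) * q + q + 2) * (a * b)
        + 2 * q * (a + b) = 0)
    (h3 : (μ : ℂ) + 2 - 2 / a - 2 / b = 0) :
    False :=
  no_solution_O0_neg2_neg3_general μ hμ₁ q a b ha0 hb0 hab h1 h2 h3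
end

section
/- Let μ ∈ (−1, 0) be real. The residue conditions μ/a + 3/(a−1) − 2/(a−b) = 0 and μ/b + 3/(b−1) − 2/(b−a) = 0 (with a ≠ b, a, b ∉ {0, 1}) are solved exactly by a = (−2+μ+μ² + √2·√(2−μ−μ²))/((μ+1)(μ+2)) and b = (−2+μ+μ² − √2·√(2−μ−μ²))/((μ+1)(μ+2)) (up to swapping a and b). -/
/-!
Clearing denominators turns each residue condition into a quadratic equation in `a` and `b`.
The difference of the two equations factors through `a - b`, leaving the linear relation
`(μ + 1)(a + b) = 2(μ - 1)`, and their sum then fixes `a b = μ(μ - 1)/((μ + 1)(μ + 2))`.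
So `a` and `b` are the two roots of `(μ + 1)(μ + 2) x² - 2(μ - 1)(μ + 2) x + μ(μ - 1)`, whose
reduced discriminant is `2(2 - μ - μ²)`.
-/

theorem add_eq_add_and_mul_eq_mul_iff {R : Type*} [CommRing R] [NoZeroDivisors R]
    {a b u v : R} : a + b = u + v ∧ a * b = u * v ↔ (a = u ∧ b = v) ∨ (a = v ∧ b = u) := by
  constructor
  · rintro ⟨hs, hp⟩
    have hroot : (a - u) * (a - v) = 0 := by linear_combination a * hs - hp
    rcases mul_eq_zero.mp hroot with hu | hv
    · left
      obtain rfl := sub_eq_zero.mp hu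
      exact ⟨rfl, add_left_cancel hs⟩
    · right
      obtain rfl := sub_eq_zero.mp hv
      exact ⟨rfl, add_left_cancel (hs.trans (add_comm u a))⟩
  · rintro (⟨rfl, rfl⟩ | ⟨rfl, rfl⟩)
    · exact ⟨rfl, rfl⟩
    · exact ⟨add_comm a b, mul_comm a b⟩

section Residue

variable {K : Type*} [Field K]

def residueNumerator (m x y : K) : K :=
  m * (x - 1) * (x - y) + 3 * x * (x - y) - 2 * x * (x - 1)

theorem residue_eq_zero_iff (m : K) {x y : K} (hx0 : x ≠ 0) (hx1 : x ≠ 1) (hxy : x ≠ y) :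
    m / x + 3 / (x - 1) - 2 / (x - y) = 0 ↔ residueNumerator m x y = 0 := by
  have hx1' : x - 1 ≠ 0 := sub_ne_zero.mpr hx1
  have hxy' : x - y ≠ 0 := sub_ne_zero.mpr hxy
  have hfrac : m / x + 3 / (x - 1) - 2 / (x - y)
      = residueNumerator m x y / (x * (x - 1) * (x - y)) := by
    unfold residueNumerator
    field_simp
  rw [hfrac, div_eq_zero_iff]
  simp [hx0, hx1', hxy']

theorem residueNumerator_sub_swap (m a b : K) :
    residueNumerator m a b - residueNumerator m b a
      = (a - b) * ((m + 1) * (a + b) - 2 * (m - 1)) := by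
  unfold residueNumerator
  ring

theorem residueNumerator_add_swap (m a b : K) :
    residueNumerator m a b + residueNumerator m b a
      = (m + 1) * (a + b) ^ 2 + 2 * (a + b) - 4 * (m + 2) * (a * b) := by
  unfold residueNumerator
  ring

theorem residueNumerator_eq_zero_and_swap_iff {m a b : K} (h2 : (2 : K) ≠ 0)
    (hm1 : m + 1 ≠ 0) (hm2 : m + 2 ≠ 0) (hab : a ≠ b) :
    residueNumerator m a b = 0 ∧ residueNumerator m b a = 0
      ↔ a + b = 2 * (m - 1) / (m + 1) ∧ a * b = m * (m - 1) / ((m + 1) * (m + 2)) := by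
  rw [eq_div_iff hm1, eq_div_iff (mul_ne_zero hm1 hm2)]
  have hsub := residueNumerator_sub_swap m a b
  have hadd := residueNumerator_add_swap m a b
  constructor
  · rintro ⟨hnum_ab, hnum_ba⟩
    rw [hnum_ab, hnum_ba, sub_zero, eq_comm, mul_eq_zero, or_iff_right (sub_ne_zero.mpr hab),
      sub_eq_zero] at hsub
    rw [hnum_ab, hnum_ba, add_zero] at hadd
    refine ⟨by linear_combination hsub, mul_left_cancel₀ (mul_ne_zero h2 h2) ?_⟩
    linear_combination (m + 1) * hadd + ((m + 1) * (a + b) + 2 * (m - 1) + 2) * hsub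
  · rintro ⟨hs, hp⟩
    have hsum : residueNumerator m a b + residueNumerator m b a = 0 := by
      refine mul_left_cancel₀ hm1 ?_
      rw [hadd]
      linear_combination ((m + 1) * (a + b) + 2 * (m - 1) + 2) * hs - 4 * hp
    have hdiff : residueNumerator m a b - residueNumerator m b a = 0 := by
      rw [hsub]
      linear_combination (a - b) * hs
    refine ⟨mul_left_cancel₀ h2 ?_, mul_left_cancel₀ h2 ?_⟩
    · linear_combination hsum + hdiff
    · linear_combination hsum - hdiff

end Residue

/-- Let `μ ∈ (−1, 0)` be real.  For distinct `a, b ∈ ℂ ∖ {0, 1}`, the residue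
conditions `μ/a + 3/(a−1) − 2/(a−b) = 0` and `μ/b + 3/(b−1) − 2/(b−a) = 0`
hold if and only if (up to swapping `a` and `b`)
`a = (−2+μ+μ² + √2·√(2−μ−μ²))/((μ+1)(μ+2))` and
`b = (−2+μ+μ² − √2·√(2−μ−μ²))/((μ+1)(μ+2))`. -/
theorem residue_conditions_solution
    (μ : ℝ) (hμ₁ : -1 < μ) (hμ₂ : μ < 0)
    (a b : ℂ) (hab : a ≠ b)
    (ha0 : a ≠ 0) (ha1 : a ≠ 1) (hb0 : b ≠ 0) (hb1 : b ≠ 1) :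
    ((μ : ℂ) / a + 3 / (a - 1) - 2 / (a - b) = 0
      ∧ (μ : ℂ) / b + 3 / (b - 1) - 2 / (b - a) = 0)
    ↔ ((a = (-2 + (μ : ℂ) + (μ : ℂ) ^ 2
            + (Real.sqrt 2 : ℂ) * (Real.sqrt (2 - μ - μ ^ 2) : ℂ))
              / (((μ : ℂ) + 1) * ((μ : ℂ) + 2))
        ∧ b = (-2 + (μ : ℂ) + (μ : ℂ) ^ 2
            - (Real.sqrt 2 : ℂ) * (Real.sqrt (2 - μ - μ ^ 2) : ℂ))
              / (((μ : ℂ) + 1) * ((μ : ℂ) + 2)))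
      ∨ (b = (-2 + (μ : ℂ) + (μ : ℂ) ^ 2
            + (Real.sqrt 2 : ℂ) * (Real.sqrt (2 - μ - μ ^ 2) : ℂ))
              / (((μ : ℂ) + 1) * ((μ : ℂ) + 2))
        ∧ a = (-2 + (μ : ℂ) + (μ : ℂ) ^ 2
            - (Real.sqrt 2 : ℂ) * (Real.sqrt (2 - μ - μ ^ 2) : ℂ))
              / (((μ : ℂ) + 1) * ((μ : ℂ) + 2)))) := by
  have hm1 : (μ : ℂ) + 1 ≠ 0 := by exact_mod_cast (by linarith : μ + 1 ≠ 0)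
  have hm2 : (μ : ℂ) + 2 ≠ 0 := by exact_mod_cast (by linarith : μ + 2 ≠ 0)
  set r : ℂ := (Real.sqrt 2 : ℂ) * (Real.sqrt (2 - μ - μ ^ 2) : ℂ)
  have hr : r ^ 2 = 2 * (2 - μ - μ ^ 2) := by
    have hdisc : 0 ≤ 2 - μ - μ ^ 2 := by nlinarith
    simp only [r, mul_pow, ← Complex.ofReal_pow, Real.sq_sqrt zero_le_two, Real.sq_sqrt hdisc]
    push_cast
    ring
  clear_value r
  set u := (-2 + (μ : ℂ) + (μ : ℂ) ^ 2 + r) / (((μ : ℂ) + 1) * ((μ : ℂ) + 2))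
  set v := (-2 + (μ : ℂ) + (μ : ℂ) ^ 2 - r) / (((μ : ℂ) + 1) * ((μ : ℂ) + 2))
  have hsum : u + v = 2 * (μ - 1) / (μ + 1) := by
    simp only [u, v]
    field_simp
    ring
  have hprod : u * v = μ * (μ - 1) / ((μ + 1) * (μ + 2)) := by
    simp only [u, v]
    field_simp
    linear_combination (-1 : ℂ) * hr
  rw [residue_eq_zero_iff _ ha0 ha1 hab, residue_eq_zero_iff _ hb0 hb1 hab.symm,
    residueNumerator_eq_zero_and_swap_iff two_ne_zero hm1 hm2 hab, ← hsum, ← hprod,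
    add_eq_add_and_mul_eq_mul_iff]
  exact or_congr Iff.rfl and_comm
end

section
/- Let a ∈ ℂ ∖ {0, ±1} and q ∈ ℂ ∖ {0, ±1} with a ≠ ±q, and μ ∈ ℝ. If 2μa/(a²−1) + 2a/(a²−q²) + 1/a = 0 and a² = −(1 − μ − q²)/(3 + μ − 3q²), then the residues of the 1-form (z²−1)^μ(z²−q²)z²/(z²−a²)² dz at z = a and z = −a both vanish. -/
/-!
At a double pole `z = a` the residue of `f(z)/(z - a)²(z + a)² dz` is the derivative of
`f(z)/(z + a)²` at `a`, which equals `(a f'(a) - f(a))/(4a³)`; so it vanishes exactly when the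
logarithmic derivative `f'/f` takes the value `1/a` at `a`. For `f(z) = (z²-1)^μ (z²-q²) z²`
this is the hypothesis `2μa/(a²-1) + 2a/(a²-q²) + 1/a = 0`. The condition only involves `a²`,
so it holds at `-a` as well.
-/

open Complex

theorem hasDerivAt_div_add_sq_of_mul_deriv_eq {𝕜 : Type*} [NontriviallyNormedField 𝕜]
    [CharZero 𝕜] {f : 𝕜 → 𝕜} {f' a : 𝕜} (hf : HasDerivAt f f' a) (ha : a ≠ 0)
    (hfa : a * f' = f a) :
    HasDerivAt (fun z => f z / (z + a) ^ 2) 0 a := by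
  have h2a : a + a ≠ 0 := by rw [← two_mul]; exact mul_ne_zero two_ne_zero ha
  have hsq : HasDerivAt (fun z => (z + a) ^ 2) (2 * (a + a)) a := by
    simpa using ((hasDerivAt_id a).add_const a).fun_pow 2
  refine (hf.div hsq (pow_ne_zero 2 h2a)).congr_deriv ?_
  rw [div_eq_zero_iff]
  left
  linear_combination (4 * a) * hfa

theorem hasDerivAt_cpow_sq_sub_one_mul_sq_sub_mul_sq (μ q : ℂ) {b : ℂ}
    (hb : b ^ 2 - 1 ∈ slitPlane) :
    HasDerivAt (fun z : ℂ => (z ^ 2 - 1) ^ μ * (z ^ 2 - q ^ 2) * z ^ 2)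
      ((b ^ 2 - 1) ^ μ * (2 * b) *
        (μ * (b ^ 2 - q ^ 2) * b ^ 2 / (b ^ 2 - 1) + b ^ 2 + (b ^ 2 - q ^ 2))) b := by
  have hb0 : b ^ 2 - 1 ≠ 0 := slitPlane_ne_zero hb
  have hsq : HasDerivAt (fun z : ℂ => z ^ 2) (2 * b) b := by simpa using hasDerivAt_pow 2 b
  have hcpow := (hsq.sub_const 1).cpow_const (c := μ) hb
  refine ((hcpow.fun_mul (hsq.sub_const (q ^ 2))).fun_mul hsq).congr_deriv ?_
  rw [cpow_sub _ _ hb0, cpow_one]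
  field_simp

theorem mul_deriv_eq_of_critical (μ q : ℂ) {b : ℂ} (hb1 : b ^ 2 - 1 ≠ 0)
    (hcrit : 2 * μ * b ^ 2 * (b ^ 2 - q ^ 2) + 2 * b ^ 2 * (b ^ 2 - 1)
      + (b ^ 2 - 1) * (b ^ 2 - q ^ 2) = 0) :
    b * ((b ^ 2 - 1) ^ μ * (2 * b) *
        (μ * (b ^ 2 - q ^ 2) * b ^ 2 / (b ^ 2 - 1) + b ^ 2 + (b ^ 2 - q ^ 2)))
      = (b ^ 2 - 1) ^ μ * (b ^ 2 - q ^ 2) * b ^ 2 := by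
  field_simp
  linear_combination (b ^ 2 * (b ^ 2 - 1) ^ μ) * hcrit

theorem critical_of_log_deriv_eq (μ q : ℂ) {a : ℂ} (ha0 : a ≠ 0) (ha1 : a ^ 2 - 1 ≠ 0)
    (haq : a ^ 2 - q ^ 2 ≠ 0)
    (h : 2 * μ * a / (a ^ 2 - 1) + 2 * a / (a ^ 2 - q ^ 2) + 1 / a = 0) :
    2 * μ * a ^ 2 * (a ^ 2 - q ^ 2) + 2 * a ^ 2 * (a ^ 2 - 1)
      + (a ^ 2 - 1) * (a ^ 2 - q ^ 2) = 0 := by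
  field_simp at h
  linear_combination h

theorem residues_vanish_O8pi_fournoid_general
    (μ : ℝ)
    (a q : ℂ)
    (ha0 : a ≠ 0)
    (haq : a ≠ q) (hamq : a ≠ -q)
    (hbranch : a ^ 2 - 1 ∈ Complex.slitPlane)
    (h1 : 2 * (μ : ℂ) * a / (a ^ 2 - 1) + 2 * a / (a ^ 2 - q ^ 2) + 1 / a = 0)
    (h : ℂ → ℂ)
    (hh : ∀ z : ℂ, h z = (z ^ 2 - 1) ^ (μ : ℂ) * (z ^ 2 - q ^ 2) * z ^ 2) :
    deriv (fun z => h z / (z + a) ^ 2) a = 0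
    ∧ deriv (fun z => h z / (z - a) ^ 2) (-a) = 0 := by
  have haq2 : a ^ 2 - q ^ 2 ≠ 0 := by
    rw [sq_sub_sq]
    exact mul_ne_zero (fun h => hamq (eq_neg_of_add_eq_zero_left h)) (sub_ne_zero.mpr haq)
  have hcrit := critical_of_log_deriv_eq μ q ha0 (slitPlane_ne_zero hbranch) haq2 h1
  have hres : ∀ b : ℂ, b ^ 2 = a ^ 2 → deriv (fun z => h z / (z + b) ^ 2) b = 0 := by
    intro b hb
    have hb0 : b ≠ 0 := by rintro rfl; exact ha0 (by simpa using hb.symm)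
    rw [← hb] at hbranch hcrit
    rw [funext hh]
    exact (hasDerivAt_div_add_sq_of_mul_deriv_eq
      (hasDerivAt_cpow_sq_sub_one_mul_sq_sub_mul_sq μ q hbranch) hb0
      (mul_deriv_eq_of_critical μ q (slitPlane_ne_zero hbranch) hcrit)).deriv
  refine ⟨hres a rfl, ?_⟩
  simpa only [← sub_eq_add_neg] using hres (-a) (neg_sq a)

/-- Remark A.19 (residue computation).  Let `h(z) = (z²−1)^μ(z²−q²)z²` and
consider the 1-form `ω = h(z)/((z−a)²(z+a)²) dz`, with double poles at
`z = ±a`; its residue at `z = a` is `d/dz[h(z)/(z+a)²]` at `z = a`, and its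
residue at `z = −a` is `d/dz[h(z)/(z−a)²]` at `z = −a`.  If
`2μa/(a²−1) + 2a/(a²−q²) + 1/a = 0` and `a² = −(1−μ−q²)/(3+μ−3q²)`, then both
residues vanish. -/
theorem residues_vanish_O8pi_fournoid
    (μ : ℝ)
    (a q : ℂ)
    (ha0 : a ≠ 0) (ha1 : a ≠ 1) (ham1 : a ≠ -1)
    (hq0 : q ≠ 0) (hq1 : q ≠ 1) (hqm1 : q ≠ -1)
    (haq : a ≠ q) (hamq : a ≠ -q)
    (hbranch : a ^ 2 - 1 ∈ Complex.slitPlane)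
    (hden : 3 + (μ : ℂ) - 3 * q ^ 2 ≠ 0)
    (h1 : 2 * (μ : ℂ) * a / (a ^ 2 - 1) + 2 * a / (a ^ 2 - q ^ 2) + 1 / a = 0)
    (h2 : a ^ 2 = -((1 - (μ : ℂ) - q ^ 2) / (3 + (μ : ℂ) - 3 * q ^ 2)))
    (h : ℂ → ℂ)
    (hh : ∀ z : ℂ, h z = (z ^ 2 - 1) ^ (μ : ℂ) * (z ^ 2 - q ^ 2) * z ^ 2) :
    deriv (fun z => h z / (z + a) ^ 2) a = 0
    ∧ deriv (fun z => h z / (z - a) ^ 2) (-a) = 0 :=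
  residues_vanish_O8pi_fournoid_general μ a q ha0 haq hamq hbranch h1 h hh
end
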